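/- arXiv:2401.00162 — 4 statements merged into one kernel-verified Lean document; each statement's English description precedes it below -/
import Mathlib

section
/- For any two policies π and π' on a finite MDP with discount γ ∈ [0,1), the ℓ¹ distance between their discounted future state distributions is bounded by an average total-variation divergence of the action distributions: ‖d^{π'} − d^π‖₁ ≤ (2γ/(1−γ)) · E_{s∼d^π}[ D_TV(π'∥π)[s] ], where D_TV(π'∥π)[s] = (1/2) Σ_a |π'(a|s) − π(a|s)|. -/
open Finset

/-- ℙ(s_t = s | π, ρ0, P): time-indexed state distribution of a finite MDP. -/
noncomputable def visit {S A : Type*} [Fintype S] [Fintype A]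
    (ρ0 : S → ℝ) (π : S → A → ℝ) (P : S → A → S → ℝ) : ℕ → S → ℝ
  | 0 => ρ0
  | (t + 1) => fun s' => ∑ s, ∑ a, visit ρ0 π P t s * π s a * P s a s'

/-- Discounted future state distribution d^π(s) = (1−γ) Σ_t γ^t ℙ(s_t = s | π). -/
noncomputable def dvisit {S A : Type*} [Fintype S] [Fintype A]
    (ρ0 : S → ℝ) (π : S → A → ℝ) (P : S → A → S → ℝ) (γ : ℝ) (s : S) : ℝ :=
  (1 - γ) * ∑' t : ℕ, γ ^ t * visit ρ0 π P t s

/-!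
Writing `μ ↦ μ P_π` for one step of the state dynamics (`nextStateDist`), `d^π` satisfies the flow
equation `d^π = (1 - γ) ρ₀ + γ d^π P_π`. Subtracting the flow equations of `π'` and `π` gives
`d^{π'} - d^π = γ ((d^{π'} - d^π) P_{π'} + d^π (P_{π'} - P_π))`. A Markov kernel does not increase
the ℓ¹ norm, and `‖d^π (P_{π'} - P_π)‖₁ ≤ Σ_s d^π(s) ‖π'(·|s) - π(·|s)‖₁`, so
`‖d^{π'} - d^π‖₁ ≤ γ ‖d^{π'} - d^π‖₁ + 2γ E_{s∼d^π}[D_TV(π'‖π)[s]]`; rearranging gives the bound.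
-/

theorem sum_abs_sum_mul_le_sum_abs {ι S : Type*} [Fintype ι] [Fintype S] (f : ι → ℝ)
    {K : ι → S → ℝ} (hK : ∀ i, K i ∈ stdSimplex ℝ S) :
    ∑ s, |∑ i, f i * K i s| ≤ ∑ i, |f i| :=
  calc ∑ s, |∑ i, f i * K i s| ≤ ∑ s, ∑ i, |f i| * K i s :=
        sum_le_sum fun s _ => (abs_sum_le_sum_abs _ _).trans_eq <|
          sum_congr rfl fun i _ => by rw [abs_mul, abs_of_nonneg ((hK i).1 s)]
    _ = ∑ i, |f i| := by
        rw [sum_comm]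
        exact sum_congr rfl fun i _ => by rw [← mul_sum, (hK i).2, mul_one]

theorem abs_mul_sub_mul_le {R : Type*} [CommRing R] [LinearOrder R] [IsStrictOrderedRing R]
    {x x' y y' : R} (hx : 0 ≤ x) (hy' : 0 ≤ y') :
    |x' * y' - x * y| ≤ |x' - x| * y' + x * |y' - y| :=
  calc |x' * y' - x * y| = |(x' - x) * y' + x * (y' - y)| := by congr 1; ring
    _ ≤ |(x' - x) * y'| + |x * (y' - y)| := abs_add_le _ _
    _ = |x' - x| * y' + x * |y' - y| := by
        rw [abs_mul, abs_mul, abs_of_nonneg hx, abs_of_nonneg hy']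

section MDP

variable {S A : Type*} [Fintype S] [Fintype A]

noncomputable def nextStateDist (π : S → A → ℝ) (P : S → A → S → ℝ) (μ : S → ℝ) (s' : S) : ℝ :=
  ∑ s, ∑ a, μ s * π s a * P s a s'

theorem visit_succ (ρ0 : S → ℝ) (π : S → A → ℝ) (P : S → A → S → ℝ) (t : ℕ) :
    visit ρ0 π P (t + 1) = nextStateDist π P (visit ρ0 π P t) :=
  rfl

theorem nextStateDist_mem_stdSimplex {π : S → A → ℝ} {P : S → A → S → ℝ} {μ : S → ℝ}
    (hμ : μ ∈ stdSimplex ℝ S) (hπ : ∀ s, π s ∈ stdSimplex ℝ A)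
    (hP : ∀ s a, P s a ∈ stdSimplex ℝ S) : nextStateDist π P μ ∈ stdSimplex ℝ S := by
  refine ⟨fun s' => sum_nonneg fun s _ => sum_nonneg fun a _ =>
    mul_nonneg (mul_nonneg (hμ.1 s) ((hπ s).1 a)) ((hP s a).1 s'), ?_⟩
  calc ∑ s', nextStateDist π P μ s' = ∑ s, ∑ a, μ s * π s a * ∑ s', P s a s' := by
        simp only [nextStateDist, mul_sum]
        rw [sum_comm]
        exact sum_congr rfl fun s _ => sum_comm
    _ = 1 := by simp only [(hP _ _).2, mul_one, ← mul_sum, (hπ _).2, hμ.2]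

theorem sum_abs_nextStateDist_sub_le {π π' : S → A → ℝ} {P : S → A → S → ℝ} {μ μ' : S → ℝ}
    (hμ : ∀ s, 0 ≤ μ s) (hπ' : ∀ s, π' s ∈ stdSimplex ℝ A)
    (hP : ∀ s a, P s a ∈ stdSimplex ℝ S) :
    ∑ s, |nextStateDist π' P μ' s - nextStateDist π P μ s|
      ≤ ∑ s, |μ' s - μ s| + ∑ s, μ s * ∑ a, |π' s a - π s a| := by
  have hdiff : ∀ s', nextStateDist π' P μ' s' - nextStateDist π P μ s'
      = ∑ p : S × A, (μ' p.1 * π' p.1 p.2 - μ p.1 * π p.1 p.2) * P p.1 p.2 s' := fun s' => by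
    simp only [nextStateDist, Fintype.sum_prod_type, ← sum_sub_distrib, sub_mul]
  calc ∑ s, |nextStateDist π' P μ' s - nextStateDist π P μ s|
      ≤ ∑ p : S × A, |μ' p.1 * π' p.1 p.2 - μ p.1 * π p.1 p.2| := by
        simp only [hdiff]
        exact sum_abs_sum_mul_le_sum_abs _ fun p => hP p.1 p.2
    _ ≤ ∑ p : S × A, (|μ' p.1 - μ p.1| * π' p.1 p.2 + μ p.1 * |π' p.1 p.2 - π p.1 p.2|) :=
        sum_le_sum fun p _ => abs_mul_sub_mul_le (hμ p.1) ((hπ' p.1).1 p.2)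
    _ = ∑ s, |μ' s - μ s| + ∑ s, μ s * ∑ a, |π' s a - π s a| := by
        simp only [Fintype.sum_prod_type, sum_add_distrib, ← mul_sum, (hπ' _).2, mul_one]

variable {ρ0 : S → ℝ} {π : S → A → ℝ} {P : S → A → S → ℝ} {γ : ℝ}

theorem visit_mem_stdSimplex (hρ : ρ0 ∈ stdSimplex ℝ S) (hπ : ∀ s, π s ∈ stdSimplex ℝ A)
    (hP : ∀ s a, P s a ∈ stdSimplex ℝ S) (t : ℕ) : visit ρ0 π P t ∈ stdSimplex ℝ S := by
  induction t with
  | zero => exact hρ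
  | succ t ih => exact nextStateDist_mem_stdSimplex ih hπ hP

theorem summable_pow_mul_visit (hγ0 : 0 ≤ γ) (hγ1 : γ < 1) (hρ : ρ0 ∈ stdSimplex ℝ S)
    (hπ : ∀ s, π s ∈ stdSimplex ℝ A) (hP : ∀ s a, P s a ∈ stdSimplex ℝ S) (s : S) :
    Summable fun t => γ ^ t * visit ρ0 π P t s := by
  have hv t := mem_Icc_of_mem_stdSimplex (visit_mem_stdSimplex hρ hπ hP t) s
  exact (summable_geometric_of_lt_one hγ0 hγ1).of_nonneg_of_le
    (fun t => mul_nonneg (pow_nonneg hγ0 t) (hv t).1)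
    (fun t => mul_le_of_le_one_right (pow_nonneg hγ0 t) (hv t).2)

theorem dvisit_nonneg (hγ0 : 0 ≤ γ) (hγ1 : γ ≤ 1) (hρ : ρ0 ∈ stdSimplex ℝ S)
    (hπ : ∀ s, π s ∈ stdSimplex ℝ A) (hP : ∀ s a, P s a ∈ stdSimplex ℝ S) (s : S) :
    0 ≤ dvisit ρ0 π P γ s :=
  mul_nonneg (sub_nonneg.2 hγ1) <| tsum_nonneg fun t =>
    mul_nonneg (pow_nonneg hγ0 t) ((visit_mem_stdSimplex hρ hπ hP t).1 s)

theorem dvisit_eq_add_nextStateDist (hγ0 : 0 ≤ γ) (hγ1 : γ < 1) (hρ : ρ0 ∈ stdSimplex ℝ S)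
    (hπ : ∀ s, π s ∈ stdSimplex ℝ A) (hP : ∀ s a, P s a ∈ stdSimplex ℝ S) (s' : S) :
    dvisit ρ0 π P γ s' = (1 - γ) * ρ0 s' + γ * nextStateDist π P (dvisit ρ0 π P γ) s' := by
  have hv := summable_pow_mul_visit hγ0 hγ1 hρ hπ hP
  have hshift : HasSum (fun t => γ ^ (t + 1) * visit ρ0 π P (t + 1) s')
      (γ * ∑ s, ∑ a, (∑' t, γ ^ t * visit ρ0 π P t s) * π s a * P s a s') := by
    refine ((hasSum_sum fun s _ => hasSum_sum fun a _ =>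
      ((hv s).hasSum.mul_right (π s a)).mul_right (P s a s')).mul_left γ).congr_fun fun t => ?_
    simp only [visit_succ, nextStateDist, mul_sum]
    exact sum_congr rfl fun s _ => sum_congr rfl fun a _ => by ring
  have hnext : nextStateDist π P (dvisit ρ0 π P γ) s'
      = (1 - γ) * ∑ s, ∑ a, (∑' t, γ ^ t * visit ρ0 π P t s) * π s a * P s a s' := by
    simp only [nextStateDist, dvisit, mul_sum, mul_assoc]
  rw [hnext, dvisit, (hv s').tsum_eq_zero_add, hshift.tsum_eq, pow_zero, one_mul]
  simp only [visit]
  ring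

theorem sum_abs_dvisit_sub_le {π' : S → A → ℝ} (hγ0 : 0 ≤ γ) (hγ1 : γ < 1)
    (hρ : ρ0 ∈ stdSimplex ℝ S) (hπ : ∀ s, π s ∈ stdSimplex ℝ A)
    (hπ' : ∀ s, π' s ∈ stdSimplex ℝ A) (hP : ∀ s a, P s a ∈ stdSimplex ℝ S) :
    ∑ s, |dvisit ρ0 π' P γ s - dvisit ρ0 π P γ s|
      ≤ γ * (∑ s, |dvisit ρ0 π' P γ s - dvisit ρ0 π P γ s|
        + ∑ s, dvisit ρ0 π P γ s * ∑ a, |π' s a - π s a|) :=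
  calc ∑ s, |dvisit ρ0 π' P γ s - dvisit ρ0 π P γ s|
      = γ * ∑ s, |nextStateDist π' P (dvisit ρ0 π' P γ) s
          - nextStateDist π P (dvisit ρ0 π P γ) s| := by
        rw [mul_sum]
        refine sum_congr rfl fun s _ => ?_
        rw [dvisit_eq_add_nextStateDist hγ0 hγ1 hρ hπ hP,
          dvisit_eq_add_nextStateDist hγ0 hγ1 hρ hπ' hP, add_sub_add_left_eq_sub, ← mul_sub,
          abs_mul, abs_of_nonneg hγ0]
    _ ≤ _ := by
        gcongr
        exact sum_abs_nextStateDist_sub_le (dvisit_nonneg hγ0 hγ1.le hρ hπ hP) hπ' hP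

end MDP

/-- ‖d^{π'} − d^π‖₁ ≤ (2γ/(1−γ)) · E_{s∼d^π}[ D_TV(π'∥π)[s] ]. -/
theorem dvisit_l1_bound_by_average_policy_tv {S A : Type*} [Fintype S] [Fintype A]
    (ρ0 : S → ℝ) (π π' : S → A → ℝ) (P : S → A → S → ℝ) (γ : ℝ)
    (hγ0 : 0 ≤ γ) (hγ1 : γ < 1)
    (hρ0 : ∀ s, 0 ≤ ρ0 s) (hρ1 : ∑ s, ρ0 s = 1)
    (hπ0 : ∀ s a, 0 ≤ π s a) (hπ1 : ∀ s, ∑ a, π s a = 1)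
    (hπ'0 : ∀ s a, 0 ≤ π' s a) (hπ'1 : ∀ s, ∑ a, π' s a = 1)
    (hP0 : ∀ s a s', 0 ≤ P s a s') (hP1 : ∀ s a, ∑ s', P s a s' = 1) :
    ∑ s, |dvisit ρ0 π' P γ s - dvisit ρ0 π P γ s|
      ≤ (2 * γ / (1 - γ)) *
        ∑ s, dvisit ρ0 π P γ s * ((1 / 2) * ∑ a, |π' s a - π s a|) := by
  have hflow := sum_abs_dvisit_sub_le hγ0 hγ1 ⟨hρ0, hρ1⟩ (fun s => ⟨hπ0 s, hπ1 s⟩)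
    (fun s => ⟨hπ'0 s, hπ'1 s⟩) fun s a => ⟨hP0 s a, hP1 s a⟩
  have hrhs : 2 * γ / (1 - γ) * ∑ s, dvisit ρ0 π P γ s * ((1 / 2) * ∑ a, |π' s a - π s a|)
      = (γ * ∑ s, dvisit ρ0 π P γ s * ∑ a, |π' s a - π s a|) / (1 - γ) := by
    rw [mul_sum, mul_sum, sum_div]
    exact sum_congr rfl fun s _ => by ring
  rw [hrhs, le_div_iff₀ (sub_pos.2 hγ1)]
  linarith
end

section
/- (POSG Performance Improvement Bound.) Suppose the guidance advantage A_i satisfies A_i(s,a) ≥ λ A_e(s,a) for all (s,a) and max_s |E_{a∼π'}[A_i(s,a)]| ≤ λ · max_s |E_{a∼π'}[A_e(s,a)]| for some λ > 0. Define ε_{π'} := max_s |E_{a∼π'}[A_e(s,a)]|, T_π(π') := E_{s∼d^π, a∼π'}[A_e(s,a)], and D_π(π') := T_π(π')/(1−γ) − (2γ ε_{π'}/(1−γ)²)·E_{s∼d^π}[D_TV(π'∥π)[s]]. If the environmental objective satisfies η_e(π') − η_e(π) ≥ D_π(π') and the guidance objective satisfies η̃(π') − η̃(π) ≥ D̃_π(π')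 where D̃_π(π') is defined analogously from A_i, then the combined objective η_total = η_e + η̃ satisfies η_total(π') − η_total(π) ≥ (1+λ) D_π(π'). -/
open Finset

/-- POSG Performance Improvement Bound: under the guidance-advantage assumption,
the combined objective η_total = η_e + η̃ satisfies
η_total(π') − η_total(π) ≥ (1+λ) D_π(π'). -/
theorem posg_performance_improvement_bound {S A : Type*} [Fintype S] [Fintype A] [Nonempty S]
    (γ lam : ℝ) (hγ0 : 0 ≤ γ) (hγ1 : γ < 1) (hlam : 0 < lam)
    (d : S → ℝ) (hd0 : ∀ s, 0 ≤ d s) (hd1 : ∑ s, d s = 1)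
    (π π' : S → A → ℝ)
    (hπ'0 : ∀ s a, 0 ≤ π' s a) (hπ'1 : ∀ s, ∑ a, π' s a = 1)
    (Ae Ai : S → A → ℝ)
    (hA : ∀ s a, lam * Ae s a ≤ Ai s a)
    (hAmax : (⨆ s, |∑ a, π' s a * Ai s a|) ≤ lam * ⨆ s, |∑ a, π' s a * Ae s a|)
    (ηe ηi : (S → A → ℝ) → ℝ)
    (hηe : ηe π' - ηe π ≥
      (∑ s, d s * ∑ a, π' s a * Ae s a) / (1 - γ)
        - (2 * γ * (⨆ s, |∑ a, π' s a * Ae s a|) / (1 - γ) ^ 2) *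
          ∑ s, d s * ((1 / 2) * ∑ a, |π' s a - π s a|))
    (hηi : ηi π' - ηi π ≥
      (∑ s, d s * ∑ a, π' s a * Ai s a) / (1 - γ)
        - (2 * γ * (⨆ s, |∑ a, π' s a * Ai s a|) / (1 - γ) ^ 2) *
          ∑ s, d s * ((1 / 2) * ∑ a, |π' s a - π s a|)) :
    (ηe π' + ηi π') - (ηe π + ηi π) ≥
      (1 + lam) *
        ((∑ s, d s * ∑ a, π' s a * Ae s a) / (1 - γ)
          - (2 * γ * (⨆ s, |∑ a, π' s a * Ae s a|) / (1 - γ) ^ 2) *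
            ∑ s, d s * ((1 / 2) * ∑ a, |π' s a - π s a|)) := by
  set Te := ∑ s, d s * ∑ a, π' s a * Ae s a with hTe
  set Ti := ∑ s, d s * ∑ a, π' s a * Ai s a with hTi
  set εe := ⨆ s, |∑ a, π' s a * Ae s a| with hεe
  set εi := ⨆ s, |∑ a, π' s a * Ai s a| with hεi
  set TV := ∑ s, d s * ((1 / 2) * ∑ a, |π' s a - π s a|) with hTV
  have hγ : (0:ℝ) < 1 - γ := by linarith
  have hT : lam * Te ≤ Ti := by
    rw [hTe, hTi, Finset.mul_sum]
    refine Finset.sum_le_sum fun s _ => ?_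
    rw [mul_left_comm, Finset.mul_sum]
    refine mul_le_mul_of_nonneg_left (Finset.sum_le_sum fun a _ => ?_) (hd0 s)
    rw [mul_left_comm]
    exact mul_le_mul_of_nonneg_left (hA s a) (hπ'0 s a)
  have hTV0 : 0 ≤ TV := by
    refine Finset.sum_nonneg fun s _ => mul_nonneg (hd0 s) (mul_nonneg (by norm_num)
      (Finset.sum_nonneg fun a _ => abs_nonneg _))
  have hεe0 : 0 ≤ εe := by
    obtain ⟨s⟩ := ‹Nonempty S›
    exact le_ciSup_of_le (Set.Finite.bddAbove (Set.finite_range _)) s (abs_nonneg _)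
  have key : Ti / (1 - γ) - (2 * γ * εi / (1 - γ) ^ 2) * TV ≥
      lam * (Te / (1 - γ) - (2 * γ * εe / (1 - γ) ^ 2) * TV) := by
    have h1 : lam * (Te / (1 - γ)) ≤ Ti / (1 - γ) := by
      rw [mul_div_assoc']
      exact div_le_div_of_nonneg_right hT hγ.le
    have h2 : (2 * γ * εi / (1 - γ) ^ 2) * TV ≤ lam * ((2 * γ * εe / (1 - γ) ^ 2) * TV) := by
      have hc : 2 * γ * εi ≤ lam * (2 * γ * εe) := by nlinarith
      have := div_le_div_of_nonneg_right (mul_le_mul_of_nonneg_right hc hTV0)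
        (pow_pos hγ 2).le
      calc 2 * γ * εi / (1 - γ) ^ 2 * TV = 2 * γ * εi * TV / (1 - γ) ^ 2 := by ring
        _ ≤ lam * (2 * γ * εe) * TV / (1 - γ) ^ 2 := this
        _ = lam * (2 * γ * εe / (1 - γ) ^ 2 * TV) := by ring
    linarith
  have hsum : ηe π' - ηe π + (ηi π' - ηi π) ≥ (Te / (1 - γ) - 2 * γ * εe / (1 - γ) ^ 2 * TV) + lam * (Te / (1 - γ) - 2 * γ * εe / (1 - γ) ^ 2 * TV) := by linarith
  nlinarith [hsum]
end

section
/- Under Assumption A_i(s,a) ≥ λ A_e(s,a) for all (s,a) and max_s |E_{a∼π'}[A_i(s,a)]| ≤ λ ε_{π'} with ε_{π'} = max_s |E_{a∼π'}[A_e(s,a)]|, the guidance surrogate D̃_π(π') := T̃_π(π')/(1−γ) − (2γ ε̃_{π'}/(1−γ)²)·E_{s∼d^π}[D_TV(π'∥π)[s]] (with T̃_π(π') = E_{s∼d^π,a∼π'}[A_i(s,a)], ε̃_{π'} = max_s |E_{a∼π'}[A_i(s,a)]|) satisfies D̃_π(π') ≥ λ D_π(π'), where D_π(π') is the analogous surrogate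 defined from A_e. -/
open Finset

/-- Under A_i ≥ λ A_e pointwise and max_s |E_{a∼π'}[A_i]| ≤ λ·max_s |E_{a∼π'}[A_e]|,
the guidance surrogate satisfies D̃_π(π') ≥ λ D_π(π'). -/
theorem guidance_surrogate_dominates {S A : Type*} [Fintype S] [Fintype A] [Nonempty S]
    (γ lam : ℝ) (hγ0 : 0 ≤ γ) (hγ1 : γ < 1) (hlam : 0 < lam)
    (d : S → ℝ) (hd0 : ∀ s, 0 ≤ d s) (hd1 : ∑ s, d s = 1)
    (π π' : S → A → ℝ)
    (hπ'0 : ∀ s a, 0 ≤ π' s a) (hπ'1 : ∀ s, ∑ a, π' s a = 1)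
    (Ae Ai : S → A → ℝ)
    (hA : ∀ s a, lam * Ae s a ≤ Ai s a)
    (hAmax : (⨆ s, |∑ a, π' s a * Ai s a|) ≤ lam * ⨆ s, |∑ a, π' s a * Ae s a|) :
    (∑ s, d s * ∑ a, π' s a * Ai s a) / (1 - γ)
        - (2 * γ * (⨆ s, |∑ a, π' s a * Ai s a|) / (1 - γ) ^ 2) *
          ∑ s, d s * ((1 / 2) * ∑ a, |π' s a - π s a|)
      ≥ lam *
        ((∑ s, d s * ∑ a, π' s a * Ae s a) / (1 - γ)
          - (2 * γ * (⨆ s, |∑ a, π' s a * Ae s a|) / (1 - γ) ^ 2) *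
            ∑ s, d s * ((1 / 2) * ∑ a, |π' s a - π s a|)) := by
  have h1γ : (0:ℝ) < 1 - γ := by linarith
  set P : ℝ := ∑ s, d s * ((1 / 2) * ∑ a, |π' s a - π s a|) with hP
  have hP0 : 0 ≤ P := by
    apply Finset.sum_nonneg
    intro s _
    have : 0 ≤ ∑ a, |π' s a - π s a| :=
      Finset.sum_nonneg fun a _ => abs_nonneg _
    exact mul_nonneg (hd0 s) (by positivity)
  have hT : lam * (∑ s, d s * ∑ a, π' s a * Ae s a) ≤
      ∑ s, d s * ∑ a, π' s a * Ai s a := by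
    rw [Finset.mul_sum]
    apply Finset.sum_le_sum
    intro s _
    rw [mul_left_comm]
    apply mul_le_mul_of_nonneg_left _ (hd0 s)
    rw [Finset.mul_sum]
    apply Finset.sum_le_sum
    intro a _
    rw [mul_left_comm]
    exact mul_le_mul_of_nonneg_left (hA s a) (hπ'0 s a)
  have hpen : (2 * γ * (⨆ s, |∑ a, π' s a * Ai s a|) / (1 - γ) ^ 2) * P ≤
      lam * ((2 * γ * (⨆ s, |∑ a, π' s a * Ae s a|) / (1 - γ) ^ 2) * P) := by
    have : 2 * γ * (⨆ s, |∑ a, π' s a * Ai s a|) / (1 - γ) ^ 2 ≤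
        lam * (2 * γ * (⨆ s, |∑ a, π' s a * Ae s a|) / (1 - γ) ^ 2) := by
      rw [mul_div_assoc']
      apply div_le_div_of_nonneg_right _ (by positivity)
      calc 2 * γ * (⨆ s, |∑ a, π' s a * Ai s a|)
          ≤ 2 * γ * (lam * ⨆ s, |∑ a, π' s a * Ae s a|) :=
            mul_le_mul_of_nonneg_left hAmax (by positivity)
        _ = lam * (2 * γ * ⨆ s, |∑ a, π' s a * Ae s a|) := by ring
    exact (mul_le_mul_of_nonneg_right this hP0).trans_eq (mul_assoc _ _ _)
  have hTdiv : lam * ((∑ s, d s * ∑ a, π' s a * Ae s a) / (1 - γ)) ≤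
      (∑ s, d s * ∑ a, π' s a * Ai s a) / (1 - γ) := by
    rw [mul_div_assoc']
    exact div_le_div_of_nonneg_right hT h1γ.le
  have := sub_le_sub hTdiv hpen
  rw [mul_sub]
  linarith
end

section
/- (Worst-case lower bound, Corollary.) Under the assumptions of the POSG Performance Improvement Bound, if additionally E_{s∼d^π}[D_KL(π'∥π)[s]] ≤ δ, then η(π') − η(π) ≥ ((1+λ)/(1−γ)) · ( E_{s∼d^π, a∼π'}[A_e(s,a)] − √(2δ) γ ε_{π'} / (1−γ) ). -/
open Finset

/-- Worst-case lower bound (Corollary): if E_{s∼d^π}[D_KL(π'∥π)[s]] ≤ δ, then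
η(π') − η(π) ≥ ((1+λ)/(1−γ))·(E_{s∼d^π,a∼π'}[A_e] − √(2δ) γ ε_{π'}/(1−γ)). -/
theorem posg_worst_case_lower_bound {S A : Type*} [Fintype S] [Fintype A] [Nonempty S]
    (γ lam δ : ℝ) (hγ0 : 0 ≤ γ) (hγ1 : γ < 1) (hlam : 0 < lam) (hδ : 0 ≤ δ)
    (d : S → ℝ) (hd0 : ∀ s, 0 ≤ d s) (hd1 : ∑ s, d s = 1)
    (π π' : S → A → ℝ)
    (hπ'0 : ∀ s a, 0 ≤ π' s a) (hπ'1 : ∀ s, ∑ a, π' s a = 1)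
    (Ae : S → A → ℝ)
    (η : (S → A → ℝ) → ℝ)
    (hperf : η π' - η π ≥
      (1 + lam) *
        ((∑ s, d s * ∑ a, π' s a * Ae s a) / (1 - γ)
          - (2 * γ * (⨆ s, |∑ a, π' s a * Ae s a|) / (1 - γ) ^ 2) *
            ∑ s, d s * ((1 / 2) * ∑ a, |π' s a - π s a|)))
    (hKL : ∑ s, d s * ∑ a, π' s a * Real.log (π' s a / π s a) ≤ δ)
    (hTVKL : ∑ s, d s * ((1 / 2) * ∑ a, |π' s a - π s a|)
      ≤ Real.sqrt ((∑ s, d s * ∑ a, π' s a * Real.log (π' s a / π s a)) / 2)) :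
    η π' - η π ≥
      ((1 + lam) / (1 - γ)) *
        ((∑ s, d s * ∑ a, π' s a * Ae s a)
          - Real.sqrt (2 * δ) * γ * (⨆ s, |∑ a, π' s a * Ae s a|) / (1 - γ)) := by
  set X := ∑ s, d s * ∑ a, π' s a * Ae s a with hX
  set ε := ⨆ s, |∑ a, π' s a * Ae s a| with hε
  set T := ∑ s, d s * ((1 / 2) * ∑ a, |π' s a - π s a|) with hT
  have hεnn : 0 ≤ ε := by
    obtain ⟨s⟩ := ‹Nonempty S›
    exact le_trans (abs_nonneg (∑ a, π' s a * Ae s a)) (le_ciSup (Set.Finite.bddAbove (Set.finite_range fun s => |∑ a, π' s a * Ae s a|)) s)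
  have hTle : T ≤ Real.sqrt (δ / 2) :=
    hTVKL.trans (Real.sqrt_le_sqrt (by linarith))
  have hsq : Real.sqrt (2 * δ) = 2 * Real.sqrt (δ / 2) := by
    rw [show (2:ℝ) * δ = 2^2 * (δ/2) by ring, Real.sqrt_mul (by positivity),
      Real.sqrt_sq (by norm_num)]
  have h2T : 2 * T ≤ Real.sqrt (2 * δ) := by rw [hsq]; linarith
  have hγ' : 0 < 1 - γ := by linarith
  refine le_trans ?_ hperf
  have diff : (1 + lam) * (X / (1 - γ) - 2 * γ * ε / (1 - γ) ^ 2 * T)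
      - (1 + lam) / (1 - γ) * (X - Real.sqrt (2 * δ) * γ * ε / (1 - γ))
      = (1 + lam) * (γ * ε * (Real.sqrt (2 * δ) - 2 * T)) / (1 - γ) ^ 2 := by
    field_simp; ring
  have hnn : 0 ≤ (1 + lam) * (γ * ε * (Real.sqrt (2 * δ) - 2 * T)) / (1 - γ) ^ 2 := by
    apply div_nonneg _ (by positivity)
    apply mul_nonneg (by linarith)
    apply mul_nonneg (by positivity)
    linarith
  linarith
end
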